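/- arXiv:2411.10173 — 3 statements merged into one kernel-verified Lean document; each statement's English description precedes it below -/
import Mathlib

section
/- Define f : [0,1] → ℝ by f(x) = x · E[log(1 + Binomial(d, x))] = x · ∑_{k=0}^d log(1+k)·C(d,k)·x^k·(1−x)^{d−k}, for a fixed natural number d ≥ 1. Then f is convex on [0,1]. -/
/-!
Since `x · C(d,k) x^k (1-x)^(d-k) = (k+1)/(d+1) · b_{d+1,k+1}(x)`, the function is the Bernstein
polynomial `∑ c_j b_{d+1,j}` with `c_j = j log j / (d+1)`. Differentiating a Bernstein sum of
degree `n` twice gives `n(n-1)` times the Bernstein sum of degree `n-2` of the second forward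
differences of its coefficients. These are nonnegative because `t ↦ t log t` is convex, and the
Bernstein basis polynomials are nonnegative on `[0,1]`.
-/

open Polynomial Finset fwdDiff

noncomputable def bernsteinSum (R : Type*) [CommRing R] (n : ℕ) (c : ℕ → R) : R[X] :=
  ∑ j ∈ range (n + 1), C (c j) * bernsteinPolynomial R n j

section Derivative

variable {R : Type*} [CommRing R]

theorem derivative_bernsteinSum (n : ℕ) (c : ℕ → R) :
    derivative (bernsteinSum R n c) = n * bernsteinSum R (n - 1) (Δ_[1] c) := by
  cases n with
  | zero => simp [bernsteinSum, bernsteinPolynomial]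
  | succ m =>
    have hshift : ∑ i ∈ range (m + 1), C (c (i + 1)) * bernsteinPolynomial R m (i + 1) =
        ∑ i ∈ range (m + 1), C (c i) * bernsteinPolynomial R m i -
          C (c 0) * bernsteinPolynomial R m 0 := by
      rw [eq_sub_iff_add_eq, ← sum_range_succ' (fun i => C (c i) * bernsteinPolynomial R m i),
        sum_range_succ, bernsteinPolynomial.eq_zero_of_lt R m.lt_add_one, mul_zero, add_zero]
    simp only [bernsteinSum, derivative_sum, derivative_C_mul]
    rw [sum_range_succ', bernsteinPolynomial.derivative_zero]
    simp only [bernsteinPolynomial.derivative_succ, Nat.add_sub_cancel, fwdDiff, C_sub, sub_mul,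
      mul_sub, sum_sub_distrib, mul_left_comm (C _), ← mul_sum, hshift]
    ring

theorem iterate_derivative_bernsteinSum (n k : ℕ) (c : ℕ → R) :
    derivative^[k] (bernsteinSum R n c) =
      (n.descFactorial k : R[X]) * bernsteinSum R (n - k) ((Δ_[1])^[k] c) := by
  induction k generalizing n c with
  | zero => simp
  | succ k ih =>
    rw [Function.iterate_succ_apply, derivative_bernsteinSum, iterate_derivative_natCast_mul, ih,
      ← mul_assoc, ← Nat.cast_mul, ← Function.iterate_succ_apply, Nat.sub_sub, add_comm 1 k]
    congr 2
    rcases n with _ | n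
    · simp
    · exact (Nat.succ_descFactorial_succ n k).symm

end Derivative

theorem bernsteinPolynomial_eval_nonneg {R : Type*} [CommRing R] [PartialOrder R] [IsOrderedRing R]
    (n ν : ℕ) {x : R} (hx : x ∈ Set.Icc 0 1) : 0 ≤ (bernsteinPolynomial R n ν).eval x := by
  obtain ⟨hx0, hx1⟩ := hx
  have : 0 ≤ 1 - x := sub_nonneg.2 hx1
  simp only [bernsteinPolynomial, eval_mul, eval_pow, eval_natCast, eval_sub, eval_one, eval_X]
  positivity

theorem bernsteinSum_eval_nonneg {R : Type*} [CommRing R] [PartialOrder R] [IsOrderedRing R]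
    (n : ℕ) {c : ℕ → R} (hc : ∀ i, 0 ≤ c i) {x : R} (hx : x ∈ Set.Icc 0 1) :
    0 ≤ (bernsteinSum R n c).eval x := by
  simp only [bernsteinSum, eval_finsetSum, eval_mul, eval_C]
  exact sum_nonneg fun j _ => mul_nonneg (hc j) (bernsteinPolynomial_eval_nonneg n j hx)

theorem convexOn_bernsteinSum (n : ℕ) {c : ℕ → ℝ} (hc : ∀ i, 0 ≤ ((Δ_[1])^[2] c) i) :
    ConvexOn ℝ (Set.Icc 0 1) fun x => (bernsteinSum ℝ n c).eval x := by
  have hderiv (p : ℝ[X]) : deriv (fun x => p.eval x) = fun x => p.derivative.eval x :=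
    funext fun _ => p.deriv
  refine convexOn_of_deriv2_nonneg' (convex_Icc 0 1) (Polynomial.differentiableOn _)
    (by rw [hderiv]; exact Polynomial.differentiableOn _) fun x hx => ?_
  have h2 : deriv^[2] (fun x => (bernsteinSum ℝ n c).eval x) x =
      (derivative^[2] (bernsteinSum ℝ n c)).eval x := by
    simp [hderiv]
  rw [h2, iterate_derivative_bernsteinSum, eval_mul, eval_natCast]
  exact mul_nonneg (Nat.cast_nonneg _) (bernsteinSum_eval_nonneg _ hc hx)

theorem ConvexOn.fwdDiff_iter_two_nonneg {g : ℝ → ℝ} (hg : ConvexOn ℝ (Set.Ici 0) g) (i : ℕ) :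
    0 ≤ ((Δ_[1])^[2] fun j : ℕ => g j) i := by
  have hmid := hg.2 (Set.mem_Ici.2 i.cast_nonneg)
    (Set.mem_Ici.2 (by positivity : (0 : ℝ) ≤ i + 1 + 1))
    (by norm_num : (0 : ℝ) ≤ 1 / 2) (by norm_num : (0 : ℝ) ≤ 1 / 2) (by norm_num)
  simp only [smul_eq_mul] at hmid
  rw [show (1 / 2 : ℝ) * i + 1 / 2 * (i + 1 + 1) = i + 1 by ring] at hmid
  simp only [Function.iterate_succ, Function.iterate_zero, Function.comp_apply, id, fwdDiff]
  push_cast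
  linarith

theorem natCast_add_one_mul_X_mul_bernsteinPolynomial {R : Type*} [CommRing R] (n k : ℕ) :
    ((n : R[X]) + 1) * (X * bernsteinPolynomial R n k) =
      ((k : R[X]) + 1) * bernsteinPolynomial R (n + 1) (k + 1) := by
  have hchoose := congrArg (Nat.cast : ℕ → R[X]) (Nat.add_one_mul_choose_eq n k)
  push_cast at hchoose
  rw [bernsteinPolynomial, bernsteinPolynomial, Nat.add_sub_add_right]
  linear_combination (X ^ (k + 1) * (1 - X) ^ (n - k)) * hchoose

theorem mul_sum_log_mul_binomial_eq_eval_bernsteinSum (d : ℕ) (x : ℝ) :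
    x * ∑ k ∈ range (d + 1), Real.log (1 + k) * d.choose k * x ^ k * (1 - x) ^ (d - k) =
      (bernsteinSum ℝ (d + 1) (((d : ℝ) + 1)⁻¹ • fun j : ℕ => (j : ℝ) * Real.log j)).eval x := by
  rw [bernsteinSum, eval_finsetSum, sum_range_succ' _ (d + 1), mul_sum]
  simp only [Pi.smul_apply, smul_eq_mul, Nat.cast_zero, zero_mul, mul_zero, C_0, eval_zero,
    add_zero, eval_mul, eval_C]
  refine sum_congr rfl fun k _ => ?_
  have h := congrArg (eval x) (natCast_add_one_mul_X_mul_bernsteinPolynomial (R := ℝ) d k)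
  rw [bernsteinPolynomial] at h
  simp only [eval_mul, eval_add, eval_pow, eval_natCast, eval_sub, eval_one, eval_X] at h
  push_cast
  rw [add_comm 1 (k : ℝ)]
  field_simp
  linear_combination Real.log (k + 1) * h

theorem discObjective_convexOn_general (d : ℕ) :
    ConvexOn ℝ (Set.Icc (0 : ℝ) 1)
      (fun x : ℝ => x * ∑ k ∈ Finset.range (d + 1),
        Real.log (1 + (k : ℝ)) * (d.choose k : ℝ) * x ^ k * (1 - x) ^ (d - k)) := by
  simp only [mul_sum_log_mul_binomial_eq_eval_bernsteinSum]
  refine convexOn_bernsteinSum _ fun i => ?_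
  rw [fwdDiff_iter_const_smul, Pi.smul_apply, smul_eq_mul]
  exact mul_nonneg (by positivity) (Real.convexOn_mul_log.fwdDiff_iter_two_nonneg i)

/-- For fixed `d ≥ 1`, the function
`f(x) = x · E[log(1 + Binomial(d,x))] = x · ∑_{k=0}^d log(1+k)·C(d,k)·x^k·(1−x)^{d−k}`
is convex on `[0,1]`. -/
theorem discObjective_convexOn (d : ℕ) (hd : 1 ≤ d) :
    ConvexOn ℝ (Set.Icc (0 : ℝ) 1)
      (fun x : ℝ => x * ∑ k ∈ Finset.range (d + 1),
        Real.log (1 + (k : ℝ)) * (d.choose k : ℝ) * x ^ k * (1 - x) ^ (d - k)) :=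
  discObjective_convexOn_general d
end

section
/- Exhibit a discrimination game where an optimal protocol is not semantically consistent: let X be uniform on the 12-point set {±1, …, ±6} ⊂ ℝ and M = {1,…,6}. The sender S̃ mapping both i and −i to message i achieves the global minimum of the single-distractor discrimination objective ∑_m P(S(X)=m)² (value 1/6, attained by any 2-to-1 uniform mapping), yet S̃ satisfies E[‖X1 − X2‖² | S̃(X1) = S̃(X2)] = E[‖X1 − X2‖²], i.e., S̃ is not semantically consistent. -/
/-!
With `p m = P(S(X) = m)` summing to `1`, Cauchy–Schwarz gives `∑ p m ^ 2 ≥ 1 / |M|`, with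
equality when every fiber has the same size. For the conditional distance, expanding the square
over a finite set gives `∑∑ (x - y)² = 2 k ∑ x² - 2 (∑ x)²`. Each fiber `{i, -i}` of `S̃` has mean
zero, so the cross terms vanish within every fiber and globally, and both the conditional and the
unconditional expectation equal `2 E[X²]`.
-/

/-- The 12-point input space `{±1, …, ±6} ⊂ ℝ`: the pair `(i, b)` encodes the
real number `±(i+1)` with sign given by `b`. -/
noncomputable def val (s : Fin 6 × Bool) : ℝ :=
  (if s.2 then (1 : ℝ) else -1) * ((s.1 : ℝ) + 1)

/-- The sender mapping both `i` and `−i` to message `i`. -/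
def Stil (s : Fin 6 × Bool) : Fin 6 := s.1

namespace Finset
variable {α β : Type*} [Fintype β] [DecidableEq β]

theorem sum_sum_sub_sq (t : Finset α) (v : α → ℝ) :
    ∑ a ∈ t, ∑ b ∈ t, (v a - v b) ^ 2 = 2 * #t * ∑ a ∈ t, v a ^ 2 - 2 * (∑ a ∈ t, v a) ^ 2 := by
  simp only [sub_sq, sum_add_distrib, sum_sub_distrib, sum_const, nsmul_eq_mul, ← mul_sum,
    ← sum_mul, sq (∑ a ∈ t, v a)]
  ring

variable [Fintype α]

theorem sum_sum_ite_eq_sum_fiber (S : α → β) (g : α → α → ℝ) :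
    ∑ a, ∑ b, (if S a = S b then g a b else 0) =
      ∑ m, ∑ a with S a = m, ∑ b with S b = m, g a b := by
  calc ∑ a, ∑ b, (if S a = S b then g a b else 0)
      = ∑ a, ∑ b with S b = S a, g a b := by simp only [sum_filter, eq_comm]
    _ = ∑ m, ∑ a with S a = m, ∑ b with S b = S a, g a b := (sum_fiberwise _ S _).symm
    _ = ∑ m, ∑ a with S a = m, ∑ b with S b = m, g a b :=
        sum_congr rfl fun m _ => sum_congr rfl fun a ha => by rw [(mem_filter.1 ha).2]

theorem sum_fiber_card_div_card [Nonempty α] (S : α → β) :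
    ∑ m, (#{a | S a = m} : ℝ) / Fintype.card α = 1 := by
  rw [← sum_div, ← Nat.cast_sum, ← card_eq_sum_card_fiberwise fun _ _ => mem_univ _]
  exact div_self (by positivity)

theorem one_div_card_le_sum_sq_card_fiber_div [Nonempty α] (S : α → β) :
    1 / Fintype.card β ≤ ∑ m, ((#{a | S a = m} : ℝ) / Fintype.card α) ^ 2 := by
  have hcs := sq_sum_le_card_mul_sum_sq (s := univ)
    (f := fun m => (#{a | S a = m} : ℝ) / Fintype.card α)
  rw [sum_fiber_card_div_card, card_univ, one_pow] at hcs
  have : Nonempty β := ⟨S (Classical.arbitrary α)⟩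
  rwa [div_le_iff₀' (by positivity)]

theorem cond_mean_sq_dist_eq_mean_sq_dist {S : α → β} {v : α → ℝ} {k : ℕ}
    (hk : ∀ m, #{a | S a = m} = k) (hmean : ∀ m, ∑ a with S a = m, v a = 0) :
    (∑ a, ∑ b, if S a = S b then (v a - v b) ^ 2 else 0) /
        (∑ a, ∑ b, if S a = S b then (1 : ℝ) else 0) =
      (∑ a, ∑ b, (v a - v b) ^ 2) / Fintype.card α ^ 2 := by
  have hcard : (Fintype.card α : ℝ) = Fintype.card β * k := by
    rw [← card_univ, card_eq_sum_card_fiberwise fun a _ => mem_univ (S a)]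
    simp [hk]
  have hsum : ∑ a, v a = 0 := by
    rw [← sum_fiberwise univ S]
    simp [hmean]
  have hnum : (∑ a, ∑ b, if S a = S b then (v a - v b) ^ 2 else 0) = 2 * k * ∑ a, v a ^ 2 := by
    rw [sum_sum_ite_eq_sum_fiber, ← sum_fiberwise univ S (fun a => v a ^ 2), mul_sum]
    simp [sum_sum_sub_sq, hk, hmean]
  have hden : (∑ a, ∑ b, if S a = S b then (1 : ℝ) else 0) = Fintype.card β * k * k := by
    rw [sum_sum_ite_eq_sum_fiber]
    simp [hk, mul_assoc]
  rw [hnum, hden, sum_sum_sub_sq, hsum, card_univ, hcard]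
  rcases eq_or_ne (k : ℝ) 0 with hk0 | hk0
  · simp [hk0]
  rcases eq_or_ne (Fintype.card β : ℝ) 0 with hβ | hβ
  · simp [hβ]
  field_simp
  ring

end Finset

theorem card_fiber_Stil (m : Fin 6) :
    (Finset.univ.filter fun s : Fin 6 × Bool => Stil s = m).card = 2 := by
  revert m; decide

theorem sum_val_fiber_Stil (m : Fin 6) : ∑ s : Fin 6 × Bool with Stil s = m, val s = 0 := by
  rw [Finset.sum_filter, Fintype.sum_prod_type]
  simp [Stil, val]

/-- A discrimination game whose optimal protocol is not semantically consistent: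
for `X` uniform on `{±1,…,±6}` and `M = {1,…,6}`, the sender `S̃` mapping `±i ↦ i`
attains the global minimum `1/6` of the single-distractor objective `∑_m P(S(X)=m)²`
(any sender being bounded below by `1/6`), yet the expected squared distance of two
independent copies conditioned on equal messages equals the unconditional one, so
`S̃` is not semantically consistent. -/
theorem disc_optimal_not_semantically_consistent :
    (∑ m : Fin 6,
        (((Finset.univ.filter fun s : Fin 6 × Bool => Stil s = m).card : ℝ) / 12) ^ 2
      = 1 / 6) ∧
    (∀ S' : Fin 6 × Bool → Fin 6,
      1 / 6 ≤ ∑ m : Fin 6,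
        (((Finset.univ.filter fun s : Fin 6 × Bool => S' s = m).card : ℝ) / 12) ^ 2) ∧
    ((∑ s1 : Fin 6 × Bool, ∑ s2 : Fin 6 × Bool,
        if Stil s1 = Stil s2 then (val s1 - val s2) ^ 2 else 0) /
      (∑ s1 : Fin 6 × Bool, ∑ s2 : Fin 6 × Bool,
        if Stil s1 = Stil s2 then (1 : ℝ) else 0)
      = (∑ s1 : Fin 6 × Bool, ∑ s2 : Fin 6 × Bool, (val s1 - val s2) ^ 2) / 144) := by
  have hcard : (Fintype.card (Fin 6 × Bool) : ℝ) = 12 := by simp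
  refine ⟨?_, fun S' => ?_, ?_⟩
  · simp only [card_fiber_Stil]
    norm_num
  · simpa [hcard] using Finset.one_div_card_le_sum_sq_card_fiber_div S'
  · rw [Finset.cond_mean_sq_dist_eq_mean_sq_dist card_fiber_Stil sum_val_fiber_Stil, hcard]
    norm_num
end

section
/- In the 2-candidate supervised discrimination game with uniform labels, the expected loss E_{x∼X}[P(X ∈ [S(x)] | Y ≠ lbl(x))] (up to the constant factor log 2 · |𝒴|/(|𝒴|−1)) equals ∑_{m∈M} P(S(X)=m)² − ∑_{m∈M} ∑_{y∈𝒴} P(S(X)=m, Y=y)². In particular, this objective is minimized by protocols whose messages have uniform marginal probabilities while each message's equivalence class is concentrated on a single label. -/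
open Finset

/-- Supervised 2-candidate discrimination with uniform labels: for a finite input
space with point probabilities `p`, a deterministic labelling `lbl` with uniform
label distribution, and a sender `S`, the expected loss
`E_{x∼X}[P(X ∈ [S x] | Y ≠ lbl x)]` equals
`(|𝒴|/(|𝒴|−1)) · (∑_m P(S(X)=m)² − ∑_m ∑_y P(S(X)=m, Y=y)²)`,
using `P(X ∈ [m] | Y ≠ y) = (P(X∈[m]) − P(X∈[m], Y=y)) / (1 − 1/|𝒴|)`. -/
theorem supervised_discrimination_objective
    {𝒳 𝒴 M : Type*} [Fintype 𝒳] [Fintype 𝒴] [Fintype M]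
    [DecidableEq 𝒴] [DecidableEq M]
    (hY : 2 ≤ Fintype.card 𝒴)
    (p : 𝒳 → ℝ) (hp : ∀ x, 0 ≤ p x) (hp1 : ∑ x, p x = 1)
    (lbl : 𝒳 → 𝒴) (S : 𝒳 → M)
    (huniform : ∀ y : 𝒴, ∑ x ∈ univ.filter (fun x => lbl x = y), p x
      = 1 / (Fintype.card 𝒴 : ℝ)) :
    ∑ x, p x *
        (((∑ x' ∈ univ.filter (fun x' => S x' = S x), p x')
            - ∑ x' ∈ univ.filter (fun x' => S x' = S x ∧ lbl x' = lbl x), p x')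
          / (1 - 1 / (Fintype.card 𝒴 : ℝ)))
      = ((Fintype.card 𝒴 : ℝ) / ((Fintype.card 𝒴 : ℝ) - 1)) *
        ((∑ m : M, (∑ x ∈ univ.filter (fun x => S x = m), p x) ^ 2)
          - ∑ m : M, ∑ y : 𝒴,
              (∑ x ∈ univ.filter (fun x => S x = m ∧ lbl x = y), p x) ^ 2) := by
  set c : ℝ := (Fintype.card 𝒴 : ℝ) with hc
  have hc2 : (2 : ℝ) ≤ c := by rw [hc]; exact_mod_cast hY
  have hc0 : c ≠ 0 := by linarith
  have hc1 : c - 1 ≠ 0 := by intro h; linarith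
  set A : M → ℝ := fun m => ∑ x ∈ univ.filter (fun x => S x = m), p x with hA
  set B : M → 𝒴 → ℝ :=
    fun m y => ∑ x ∈ univ.filter (fun x => S x = m ∧ lbl x = y), p x with hB
  have key : ∀ g : M → 𝒴 → ℝ,
      ∑ x, p x * g (S x) (lbl x) = ∑ m, ∑ y, B m y * g m y := by
    intro g
    rw [← Finset.sum_fiberwise univ (fun x => (S x, lbl x))
      (fun x => p x * g (S x) (lbl x)), Fintype.sum_prod_type]
    refine Finset.sum_congr rfl fun m _ => Finset.sum_congr rfl fun y _ => ?_
    rw [hB]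
    simp only [Prod.mk.injEq]
    rw [Finset.sum_mul]
    refine Finset.sum_congr rfl fun x hx => ?_
    simp only [mem_filter] at hx
    rw [hx.2.1, hx.2.2]
  have hAB : ∀ m, ∑ y, B m y = A m := by
    intro m
    simp only [hA]
    rw [← Finset.sum_fiberwise (univ.filter (fun x => S x = m)) lbl p]
    refine Finset.sum_congr rfl fun y _ => ?_
    rw [hB, Finset.filter_filter]
  have hLHS : ∑ x, p x * ((A (S x) - B (S x) (lbl x)) / (1 - 1 / c))
      = (c / (c - 1)) * ∑ x, p x * (A (S x) - B (S x) (lbl x)) := by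
    rw [Finset.mul_sum]
    refine Finset.sum_congr rfl fun x _ => ?_
    have h1c : (1 : ℝ) - 1 / c ≠ 0 := by
      rw [sub_ne_zero]; intro h
      have : c = 1 := by field_simp at h; linarith
      linarith
    field_simp
  rw [hLHS, key (fun m y => A m - B m y)]
  congr 1
  rw [← Finset.sum_sub_distrib]
  refine Finset.sum_congr rfl fun m _ => ?_
  simp only [mul_sub]
  rw [Finset.sum_sub_distrib]
  congr 1
  · rw [← Finset.sum_mul, hAB m, sq]
  · exact Finset.sum_congr rfl fun y _ => (sq (B m y)).symm
end
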